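/- Let w_0 be the longest element of S_a, acting on OPol_a via the signed permutation action. Then for 1 ≤ k ≤ a, w_0(ε_k) = (−1)^{C(k,2) + k·C(a−1,2)} ε_k, where C(n,2) = n(n−1)/2. Consequently w_0 maps OΛ_a onto itself: w_0(OΛ_a) = OΛ_a. -/

import Mathlib

open scoped BigOperators

/-- The defining anticommutation relations of the odd polynomial ring. -/
inductive OddRel (a : ℕ) : FreeAlgebra ℤ (Fin a) → FreeAlgebra ℤ (Fin a) → Prop
  | anticomm (i j : Fin a) (h : i ≠ j) :
      OddRel a (FreeAlgebra.ι ℤ i * FreeAlgebra.ι ℤ j)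
        (-(FreeAlgebra.ι ℤ j * FreeAlgebra.ι ℤ i))

/-- The ring of odd polynomials in `a` variables over `ℤ`. -/
abbrev OPol (a : ℕ) : Type := RingQuot (OddRel a)

/-- The variable `x_{i+1}` (`0`-based index). -/
noncomputable def OX {a : ℕ} (i : Fin a) : OPol a :=
  RingQuot.mkRingHom (OddRel a) (FreeAlgebra.ι ℤ i)

/-- The variable `x_i` (`1`-based index), `0` if out of range. -/
noncomputable def xv (a : ℕ) (i : ℕ) : OPol a :=
  if h : 1 ≤ i ∧ i ≤ a then OX ⟨i - 1, by omega⟩ else 0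

/-- The signed variable `x̃_i = (−1)^{i−1} x_i` (`0`-based index, so the sign is `(−1)^i`). -/
noncomputable def xt (a : ℕ) (i : Fin a) : OPol a := (-1 : OPol a) ^ (i : ℕ) * OX i

/-- Odd elementary symmetric polynomial `ε_k`. -/
noncomputable def eps (a k : ℕ) : OPol a :=
  ∑ t ∈ Finset.powersetCard k (Finset.univ : Finset (Fin a)),
    ((t.sort (· ≤ ·)).map (xt a)).prod

/-- Odd complete symmetric polynomial `h_k`. -/
noncomputable def hp (a k : ℕ) : OPol a :=
  ∑ σ : Sym (Fin a) k, (((σ : Multiset (Fin a)).sort (· ≤ ·)).map (xt a)).prod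

/-- The ordered monomial `x_1^{c_1} ⋯ x_a^{c_a}`. -/
noncomputable def xmon {a : ℕ} (c : Fin a → ℕ) : OPol a :=
  ((List.finRange a).map fun i => OX i ^ c i).prod

/-- The staircase monomial `x^{δ_a} = x_1^{a−1} x_2^{a−2} ⋯ x_a^0`. -/
noncomputable def xdelta (a : ℕ) : OPol a :=
  ((List.finRange a).map fun i => OX i ^ (a - 1 - (i : ℕ))).prod

/-- Composite of the operators `d i` along a word, leftmost letter acting last (outermost). -/
noncomputable def dword {a : ℕ} (d : ℕ → OPol a →+ OPol a) : List ℕ → (OPol a →+ OPol a)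
  | [] => AddMonoidHom.id _
  | i :: l => (d i).comp (dword d l)

/-- The word `1, (2,1), (3,2,1), …, (a−1,…,2,1)` for the longest element, so that
`dword d (DList a) = ∂_1∘(∂_2∘∂_1)∘⋯∘(∂_{a−1}∘⋯∘∂_1) = D_a`. -/
def DList (a : ℕ) : List ℕ :=
  ((List.range a).map fun b => (List.range b).reverse.map (· + 1)).flatten

/-- Left multiplication by `f` as a `ℤ`-linear endomorphism. -/
noncomputable def mulL {a : ℕ} (f : OPol a) : Module.End ℤ (OPol a) :=
  (AddMonoidHom.mulLeft f).toIntLinearMap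

/-- The generators of the odd nilHecke ring inside `End_ℤ(OPol a)`. -/
noncomputable def onhGens (a : ℕ) (d : ℕ → OPol a →+ OPol a) :
    Set (Module.End ℤ (OPol a)) :=
  {T | (∃ i : Fin a, T = mulL (OX i)) ∨
    (∃ i : ℕ, 1 ≤ i ∧ i + 1 ≤ a ∧ T = (d i).toIntLinearMap)}

/-- The simple transposition `s_i` (`1`-based) of `{1,…,a}`. -/
def sperm (a : ℕ) (i : ℕ) : Equiv.Perm (Fin a) :=
  if h : 1 ≤ i ∧ i + 1 ≤ a then Equiv.swap ⟨i - 1, by omega⟩ ⟨i, by omega⟩ else 1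

/-- The permutation associated to a word in the simple transpositions. -/
def wordPerm (a : ℕ) (l : List ℕ) : Equiv.Perm (Fin a) := (l.map (sperm a)).prod

/-- Evaluation of an (even) multivariate polynomial at the squared variables `x_1², …, x_a²`. -/
noncomputable def sqEval {a : ℕ} (p : MvPolynomial (Fin a) ℤ) : OPol a :=
  ∑ m ∈ p.support,
    MvPolynomial.coeff m p • ((List.finRange a).map fun i => OX i ^ (2 * m i)).prod

/-- The odd symmetrization operator `S(f) = (−1)^{C(a,3)} w₀(D_a(f·x^{δ_a}))`. -/
noncomputable def oddSymzn (a : ℕ) (d : ℕ → OPol a →+ OPol a) (W0 : OPol a →+* OPol a)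
    (f : OPol a) : OPol a :=
  (-1 : OPol a) ^ Nat.choose a 3 * W0 (dword d (DList a) (f * xdelta a))

/-- The odd Schur polynomial `s_α = (−1)^{C(a,3)} w₀(D_a(x^α·x^{δ_a}))`. -/
noncomputable def schurP (a : ℕ) (d : ℕ → OPol a →+ OPol a) (W0 : OPol a →+* OPol a)
    (α : Fin a → ℕ) : OPol a :=
  (-1 : OPol a) ^ Nat.choose a 3 * W0 (dword d (DList a) (xmon α * xdelta a))

/-- The 0-Hecke generator `∂̄_r = x_r ∘ ∂_r`. -/
noncomputable def dbar (a : ℕ) (d : ℕ → OPol a →+ OPol a) (r : ℕ) : OPol a →+ OPol a :=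
  (AddMonoidHom.mulLeft (xv a r)).comp (d r)

/-- The `ℤ`-span of products of exactly `n` variables: the degree-`2n` component of `OPol a`. -/
def degComp (a n : ℕ) : Submodule ℤ (OPol a) :=
  Submodule.span ℤ {f : OPol a | ∃ l : List (Fin a), l.length = n ∧ f = (l.map OX).prod}

/-- Odd Schubert polynomial `𝔰_w = ∂_{w⁻¹w₀}(x^{δ_a})` for a fixed choice `red` of
reduced expressions. -/
noncomputable def schubert (a : ℕ) (d : ℕ → OPol a →+ OPol a)
    (red : Equiv.Perm (Fin a) → List ℕ) (w : Equiv.Perm (Fin a)) : OPol a :=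
  dword d (red (w⁻¹ * Fin.revPerm)) (xdelta a)

/-- Product of odd elementary symmetric polynomials along the parts of a partition,
in non-increasing order. -/
noncomputable def epsPart (a : ℕ) {n : ℕ} (p : Nat.Partition n) : OPol a :=
  (((p.parts.sort (· ≤ ·)).reverse).map (eps a)).prod

/-!
`w₀` sends `x̃ᵢ` to `(-1)^C(a-1,2) x̃_{a+1-i}`: the signs of `x̃ᵢ` and `x̃_{a+1-i}` together
account for the difference `C(a,2) - C(a-1,2) = a - 1`. Hence a monomial `x̃_{i₁} ⋯ x̃_{i_k}`,
`i₁ < ⋯ < i_k`, of `ε_k` goes to `(-1)^(k C(a-1,2))` times the monomial of the reversed index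
set written in decreasing order; as distinct `x̃`'s anticommute, sorting it costs
`(-1)^C(k,2)`, and reversal permutes the monomials of `ε_k`.

Conjugation by `w₀` turns `s_{a-i}` into `sᵢ`, so `∂ᵢ ∘ w₀` and `(-1)^C(a,2) w₀ ∘ ∂_{a-i}` obey
the same twisted Leibniz rule; they agree on `1` and on the variables, hence everywhere. Thus
`w₀` maps `OΛ_a` into itself, and onto it since `w₀² = 1`.
-/

section Ring

variable {R : Type*} [Ring R]

theorem neg_one_pow_mul_mul_neg_one_pow_mul (m n : ℕ) (x y : R) :
    (-1) ^ m * x * ((-1) ^ n * y) = (-1) ^ (m + n) * (x * y) := by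
  rw [pow_add, mul_assoc, mul_assoc, ← mul_assoc x, ← ((Commute.neg_one_left x).pow_left n).eq,
    mul_assoc]

theorem neg_one_pow_mul_eq_zsmul (n : ℕ) (x : R) : (-1 : R) ^ n * x = ((-1 : ℤ) ^ n) • x := by
  rw [zsmul_eq_mul]
  push_cast
  rfl

theorem List.prod_mul_of_forall_anticomm {l : List R} {x : R} (h : ∀ y ∈ l, y * x = -(x * y)) :
    l.prod * x = (-1) ^ l.length * (x * l.prod) := by
  induction l with
  | nil => simp
  | cons y t ih =>
    rw [List.forall_mem_cons] at h
    rw [List.prod_cons, mul_assoc, ih h.2, List.length_cons, pow_succ, ← mul_assoc y,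
      ← ((Commute.neg_one_left y).pow_left _).eq, mul_assoc, ← mul_assoc y, h.1, mul_neg_one,
      neg_mul, mul_neg, mul_assoc, neg_mul]

theorem List.prod_reverse_of_pairwise_anticomm {l : List R}
    (h : l.Pairwise fun x y => x * y = -(y * x)) :
    l.reverse.prod = (-1) ^ l.length.choose 2 * l.prod := by
  induction l with
  | nil => simp
  | cons x t ih =>
    rw [List.pairwise_cons] at h
    rw [List.reverse_cons, List.prod_append, List.prod_singleton, ih h.2, mul_assoc,
      List.prod_mul_of_forall_anticomm fun y hy => by rw [h.1 y hy, neg_neg], ← mul_assoc,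
      ← pow_add, List.length_cons, Nat.choose_succ_succ', Nat.choose_one_right, add_comm,
      List.prod_cons]

theorem AddMonoidHom.zsmul_apply_mul_of_leibniz {S : Type*} [Ring S] {φ ψ : S →+* R}
    {D : S →+ R} (hD : ∀ f g, D (f * g) = D f * φ g + ψ f * D g) (n : ℤ) (f g : S) :
    (n • D) (f * g) = (n • D) f * φ g + ψ f * (n • D) g := by
  simp only [AddMonoidHom.smul_apply, hD, smul_add, smul_mul_assoc, mul_smul_comm]

end Ring

namespace OPol

variable {a : ℕ}

theorem OX_mul_OX_of_ne {i j : Fin a} (h : i ≠ j) : OX i * OX j = -(OX j * OX i) := by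
  simpa [OX] using RingQuot.mkRingHom_rel (OddRel.anticomm i j h)

theorem OX_eq_xv (i : Fin a) : OX i = xv a (i + 1) := by
  simp [xv]

@[elab_as_elim]
theorem induction_on {P : OPol a → Prop} (f : OPol a) (intCast : ∀ n : ℤ, P n)
    (OX : ∀ i, P (OX i)) (add : ∀ f g, P f → P g → P (f + g))
    (mul : ∀ f g, P f → P g → P (f * g)) : P f := by
  obtain ⟨f, rfl⟩ := RingQuot.mkRingHom_surjective (OddRel a) f
  induction f using FreeAlgebra.induction with
  | grade0 n => simpa only [algebraMap_int_eq, eq_intCast, map_intCast] using intCast n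
  | grade1 i => exact OX i
  | mul f g hf hg => exact map_mul (RingQuot.mkRingHom _) f g ▸ mul _ _ hf hg
  | add f g hf hg => exact map_add (RingQuot.mkRingHom _) f g ▸ add _ _ hf hg

theorem ringHom_ext {R : Type*} [Ring R] {φ ψ : OPol a →+* R}
    (h : ∀ i, φ (OX i) = ψ (OX i)) : φ = ψ := by
  refine RingHom.ext fun f => ?_
  induction f using induction_on with
  | intCast n => simp
  | OX i => exact h i
  | add f g hf hg => simp [hf, hg]
  | mul f g hf hg => simp [hf, hg]

theorem addMonoidHom_ext_of_leibniz {R : Type*} [Ring R] (φ ψ : OPol a →+* R)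
    {D D' : OPol a →+ R} (hD : ∀ f g, D (f * g) = D f * φ g + ψ f * D g)
    (hD' : ∀ f g, D' (f * g) = D' f * φ g + ψ f * D' g) (h1 : D 1 = D' 1)
    (h : ∀ i, D (OX i) = D' (OX i)) : D = D' := by
  refine AddMonoidHom.ext fun f => ?_
  induction f using induction_on with
  | intCast n => rw [← zsmul_one, map_zsmul, map_zsmul, h1]
  | OX i => exact h i
  | add f g hf hg => rw [map_add, map_add, hf, hg]
  | mul f g hf hg => rw [hD, hD', hf, hg]

end OPol

section Elementary

open Finset OPol

variable {a : ℕ} {W0 : OPol a →+* OPol a}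

theorem xt_mul_xt_of_ne {i j : Fin a} (h : i ≠ j) : xt a i * xt a j = -(xt a j * xt a i) := by
  rw [xt, xt, neg_one_pow_mul_mul_neg_one_pow_mul, neg_one_pow_mul_mul_neg_one_pow_mul,
    OX_mul_OX_of_ne h, add_comm]
  -- `rw [mul_neg]` fails here: the `Neg` of `OPol a` is built on `FreeAlgebra.instRing`, its `Mul`
  -- and `Zero` on `FreeAlgebra.instSemiring`, which agree only after unfolding; hence the
  -- term-mode uses of `mul_neg`, `smul_neg` and `smul_zero` below.
  exact mul_neg (α := OPol a) _ _

theorem sort_map_rev (t : Finset (Fin a)) :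
    t.sort.map Fin.rev = (t.map Fin.revPerm.toEmbedding).sort.reverse :=
  (Fin.rev_strictAnti.sortedGT_listMap.mpr (sortedLT_sort t)).eq_reverse_of_mem_iff_of_sortedLT
    (by simp [Fin.rev_eq_iff]) (sortedLT_sort _)

variable (hW0 : ∀ i : Fin a, W0 (OX i) = (-1 : OPol a) ^ Nat.choose a 2 * OX (Fin.rev i))
include hW0

theorem W0_xt (i : Fin a) : W0 (xt a i) = (-1) ^ (a - 1).choose 2 * xt a i.rev := by
  have hchoose : a.choose 2 = (a - 1).choose 2 + (a - 1) := by
    obtain ⟨b, rfl⟩ : ∃ b, a = b + 1 := ⟨a - 1, by have := i.pos; omega⟩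
    simp [Nat.choose_succ_succ', add_comm]
  have hpar : (i : ℕ) + a.choose 2 = ((a - 1).choose 2 + i.rev) + 2 * i := by
    rw [Fin.val_rev, hchoose]
    omega
  rw [xt, xt, map_mul, map_pow, map_neg, map_one, hW0, ← mul_assoc, ← pow_add, ← mul_assoc,
    ← pow_add, hpar, pow_add _ _ (2 * _), pow_mul, neg_one_sq (R := OPol a), one_pow, mul_one]

theorem W0_prod_map_xt (l : List (Fin a)) :
    W0 (l.map (xt a)).prod =
      (-1) ^ (l.length * (a - 1).choose 2) * ((l.map Fin.rev).map (xt a)).prod := by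
  induction l with
  | nil => simp
  | cons i l ih =>
    rw [List.map_cons, List.prod_cons, map_mul, W0_xt hW0, ih,
      neg_one_pow_mul_mul_neg_one_pow_mul, List.length_cons, Nat.succ_mul, add_comm]
    rfl

theorem W0_prod_sort_xt (t : Finset (Fin a)) :
    W0 (t.sort.map (xt a)).prod = (-1) ^ ((#t).choose 2 + #t * (a - 1).choose 2) *
      ((t.map Fin.revPerm.toEmbedding).sort.map (xt a)).prod := by
  have hanti : ((t.map Fin.revPerm.toEmbedding).sort.map (xt a)).Pairwise
      fun x y => x * y = -(y * x) :=
    List.Pairwise.map (xt a) (fun _ _ => xt_mul_xt_of_ne) (sort_nodup _ _)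
  rw [W0_prod_map_xt hW0, sort_map_rev, List.map_reverse,
    List.prod_reverse_of_pairwise_anticomm hanti, ← mul_assoc, ← pow_add]
  simp only [List.length_map, length_sort, card_map, add_comm]

theorem W0_eps (k : ℕ) : W0 (eps a k) = (-1) ^ (k.choose 2 + k * (a - 1).choose 2) * eps a k := by
  set e := (Fin.revPerm (n := a)).toEmbedding
  calc W0 (eps a k)
      = ∑ t ∈ powersetCard k univ, (-1) ^ (k.choose 2 + k * (a - 1).choose 2) *
          ((t.map e).sort.map (xt a)).prod := by
        rw [eps, map_sum]
        refine sum_congr rfl fun t ht => ?_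
        rw [W0_prod_sort_xt hW0, mem_powersetCard_univ.1 ht]
    _ = (-1) ^ (k.choose 2 + k * (a - 1).choose 2) *
          ∑ t ∈ (powersetCard k univ).map (mapEmbedding e).toEmbedding,
            (t.sort.map (xt a)).prod := by
        rw [sum_map, mul_sum]
        rfl
    _ = _ := by rw [← powersetCard_map, map_univ_equiv, eps]

end Elementary

section Symmetric

open OPol

variable {a : ℕ} {s : ℕ → OPol a →+* OPol a} {d : ℕ → OPol a →+ OPol a}
  {W0 : OPol a →+* OPol a}
  (hs : ∀ i j : ℕ, 1 ≤ i → i + 1 ≤ a → 1 ≤ j → j ≤ a →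
    s i (xv a j) = if j = i then -xv a (i + 1) else if j = i + 1 then -xv a i else -xv a j)
  (hd1 : ∀ i : ℕ, 1 ≤ i → i + 1 ≤ a → d i 1 = 0)
  (hdx : ∀ i j : ℕ, 1 ≤ i → i + 1 ≤ a → 1 ≤ j → j ≤ a →
    d i (xv a j) = if j = i ∨ j = i + 1 then 1 else 0)
  (hdL : ∀ i : ℕ, 1 ≤ i → i + 1 ≤ a → ∀ f g : OPol a,
    d i (f * g) = d i f * g + s i f * d i g)
  (hW0 : ∀ i : Fin a, W0 (OX i) = (-1 : OPol a) ^ Nat.choose a 2 * OX (Fin.rev i))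

include hW0 in
theorem W0_xv {j : ℕ} (hj1 : 1 ≤ j) (hja : j ≤ a) :
    W0 (xv a j) = ((-1 : ℤ) ^ a.choose 2) • xv a (a + 1 - j) := by
  rw [xv, dif_pos ⟨hj1, hja⟩, hW0, neg_one_pow_mul_eq_zsmul, xv, dif_pos (by omega)]
  congr 3
  ext
  simp only [Fin.val_rev]
  omega

include hW0 in
theorem W0_involutive : Function.Involutive W0 := by
  have h : W0.comp W0 = RingHom.id _ := ringHom_ext fun i => by
    rw [RingHom.comp_apply, hW0, neg_one_pow_mul_eq_zsmul, map_zsmul, hW0, Fin.rev_rev,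
      neg_one_pow_mul_eq_zsmul, smul_smul, ← mul_pow, neg_one_mul, neg_neg, one_pow, one_smul,
      RingHom.id_apply]
  exact fun f => DFunLike.congr_fun h f

include hs hW0 in
theorem s_comp_W0 {i : ℕ} (hi1 : 1 ≤ i) (hia : i + 1 ≤ a) :
    (s i).comp W0 = W0.comp (s (a - i)) :=
  ringHom_ext fun j => by
    have hj := j.isLt
    rw [RingHom.comp_apply, RingHom.comp_apply, OX_eq_xv, W0_xv hW0 (by omega) (by omega),
      map_zsmul, hs i _ hi1 hia (by omega) (by omega), hs (a - i) _ (by omega) (by omega)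
      (by omega) (by omega)]
    split_ifs <;> first
      | omega
      | (rw [map_neg, W0_xv hW0 (by omega) (by omega)]
         exact (smul_neg _ _).trans (by congr 3 <;> omega))

include hs hd1 hdx hdL hW0 in
theorem d_W0 {i : ℕ} (hi1 : 1 ≤ i) (hia : i + 1 ≤ a) (f : OPol a) :
    d i (W0 f) = ((-1 : ℤ) ^ a.choose 2) • W0 (d (a - i) f) := by
  have hW0d : ∀ f g, W0 (d (a - i) (f * g)) =
      W0 (d (a - i) f) * W0 g + s i (W0 f) * W0 (d (a - i) g) := fun f g => by
    rw [hdL (a - i) (by omega) (by omega), map_add, map_mul, map_mul,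
      ← RingHom.comp_apply (s i), s_comp_W0 hs hW0 hi1 hia, RingHom.comp_apply]
  suffices (d i).comp W0.toAddMonoidHom =
      ((-1 : ℤ) ^ a.choose 2) • W0.toAddMonoidHom.comp (d (a - i)) from
    DFunLike.congr_fun this f
  refine addMonoidHom_ext_of_leibniz W0 ((s i).comp W0) (fun f g => ?_)
    (AddMonoidHom.zsmul_apply_mul_of_leibniz hW0d _) ?_ fun j => ?_
  · simp [hdL i hi1 hia]
  · simp [hd1 i hi1 hia, hd1 (a - i) (by omega) (by omega)]
  · have hj := j.isLt
    show d i (W0 (OX j)) = ((-1 : ℤ) ^ a.choose 2) • W0 (d (a - i) (OX j))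
    rw [OX_eq_xv, W0_xv hW0 (by omega) (by omega), map_zsmul, hdx i _ hi1 hia (by omega)
      (by omega), hdx (a - i) _ (by omega) (by omega) (by omega) (by omega)]
    congr 1
    split_ifs <;> first | omega | simp

end Symmetric

/-- the longest element w₀ acts on ε_k by the sign
(−1)^{C(k,2)+k·C(a−1,2)}, and maps OΛ_a onto itself. -/
theorem w0_action_on_odd_elementary (a : ℕ)
    (s : ℕ → OPol a →+* OPol a)
    (hs : ∀ i j : ℕ, 1 ≤ i → i + 1 ≤ a → 1 ≤ j → j ≤ a →
      s i (xv a j) =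
        if j = i then -xv a (i + 1) else if j = i + 1 then -xv a i else -xv a j)
    (d : ℕ → OPol a →+ OPol a)
    (hd1 : ∀ i : ℕ, 1 ≤ i → i + 1 ≤ a → d i 1 = 0)
    (hdx : ∀ i j : ℕ, 1 ≤ i → i + 1 ≤ a → 1 ≤ j → j ≤ a →
      d i (xv a j) = if j = i ∨ j = i + 1 then 1 else 0)
    (hdL : ∀ i : ℕ, 1 ≤ i → i + 1 ≤ a → ∀ f g : OPol a,
      d i (f * g) = d i f * g + s i f * d i g)
    (W0 : OPol a →+* OPol a)
    (hW0 : ∀ i : Fin a, W0 (OX i) = (-1 : OPol a) ^ Nat.choose a 2 * OX (Fin.rev i)) :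
    (∀ k : ℕ, 1 ≤ k → k ≤ a →
      W0 (eps a k) =
        (-1 : OPol a) ^ (Nat.choose k 2 + k * Nat.choose (a - 1) 2) * eps a k) ∧
    W0 '' {f : OPol a | ∀ i : ℕ, 1 ≤ i → i + 1 ≤ a → d i f = 0} =
      {f : OPol a | ∀ i : ℕ, 1 ≤ i → i + 1 ≤ a → d i f = 0} := by
  refine ⟨fun k _ _ => W0_eps hW0 k, ?_⟩
  have hmaps : Set.MapsTo W0 {f | ∀ i : ℕ, 1 ≤ i → i + 1 ≤ a → d i f = 0}
      {f | ∀ i : ℕ, 1 ≤ i → i + 1 ≤ a → d i f = 0} := fun f hf i hi1 hia => by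
    rw [d_W0 hs hd1 hdx hdL hW0 hi1 hia, hf (a - i) (by omega) (by omega), map_zero]
    exact smul_zero _
  exact hmaps.image_subset.antisymm fun g hg => ⟨W0 g, hmaps hg, W0_involutive hW0 g⟩
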